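/- arXiv:1810.11640 — 2 statements merged into one kernel-verified Lean document; each statement's English description precedes it below -/
import Mathlib

section
/- Let C ⊆ ℝⁿ be a nonempty closed convex set, x ∈ C, y, ỹ ∈ ℝⁿ, and θ, θ̃ ≥ 0. If w ∈ P_C(y, x, θ) and w̃ = P_C(ỹ) is the exact projection of ỹ onto C, then ‖w − w̃‖² ≤ ‖y − ỹ‖² + 2θ‖y − x‖². -/
/-!
Write `‖w - w̃‖² = ⟪y - w, w̃ - w⟫ + ⟪y - ỹ, w - w̃⟫ + ⟪ỹ - w̃, w - w̃⟫`. The variational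
inequalities of `w` and `w̃`, tested at each other, bound the outer terms by `θ‖y - x‖²` and `0`;
Cauchy–Schwarz and `2ab ≤ a² + b²` absorb the middle one.
-/

open RealInnerProductSpace

/-- The feasible inexact projection set `P_C(y, x, θ)`. -/
def inexProj {n : ℕ} (C : Set (EuclideanSpace ℝ (Fin n))) (y x : EuclideanSpace ℝ (Fin n))
    (θ : ℝ) : Set (EuclideanSpace ℝ (Fin n)) :=
  {w ∈ C | ∀ z ∈ C, ⟪y - w, z - w⟫ ≤ θ * ‖y - x‖ ^ 2}

section InnerProductSpace

variable {E : Type*} [NormedAddCommGroup E] [InnerProductSpace ℝ E]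

theorem norm_sub_sq_eq_inner_add_inner_add_inner (y y' w w' : E) :
    ‖w - w'‖ ^ 2 = ⟪y - w, w' - w⟫ + ⟪y - y', w - w'⟫ + ⟪y' - w', w - w'⟫ := by
  rw [← real_inner_self_eq_norm_sq]
  simp only [inner_sub_left, inner_sub_right]
  ring

theorem norm_sub_sq_le_of_inner_le {y y' w w' : E} {ε ε' : ℝ}
    (hw : ⟪y - w, w' - w⟫ ≤ ε) (hw' : ⟪y' - w', w - w'⟫ ≤ ε') :
    ‖w - w'‖ ^ 2 ≤ ‖y - y'‖ ^ 2 + 2 * (ε + ε') := by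
  have hmid : ⟪y - y', w - w'⟫ ≤ ‖y - y'‖ * ‖w - w'‖ := real_inner_le_norm _ _
  have hamgm := two_mul_le_add_sq ‖y - y'‖ ‖w - w'‖
  have hsplit := norm_sub_sq_eq_inner_add_inner_add_inner y y' w w'
  linarith

end InnerProductSpace

theorem inexProj_sq_dist_exactProj_general {n : ℕ} (C : Set (EuclideanSpace ℝ (Fin n)))
    (x : EuclideanSpace ℝ (Fin n))
    (y ytil : EuclideanSpace ℝ (Fin n)) (θ : ℝ)
    (w : EuclideanSpace ℝ (Fin n)) (hw : w ∈ inexProj C y x θ)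
    (wtil : EuclideanSpace ℝ (Fin n)) (hwtilC : wtil ∈ C)
    (hwtil : ∀ z ∈ C, ⟪ytil - wtil, z - wtil⟫ ≤ 0) :
    ‖w - wtil‖ ^ 2 ≤ ‖y - ytil‖ ^ 2 + 2 * θ * ‖y - x‖ ^ 2 := by
  have hbound := norm_sub_sq_le_of_inner_le (hw.2 wtil hwtilC) (hwtil w hw.1)
  linarith

/-- Squared-norm stability estimate for feasible inexact projections. -/
theorem inexProj_sq_dist_exactProj {n : ℕ} (C : Set (EuclideanSpace ℝ (Fin n)))
    (hCne : C.Nonempty) (hCc : IsClosed C) (hCcv : Convex ℝ C)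
    (x : EuclideanSpace ℝ (Fin n)) (hx : x ∈ C)
    (y ytil : EuclideanSpace ℝ (Fin n)) (θ : ℝ) (hθ : 0 ≤ θ)
    (w : EuclideanSpace ℝ (Fin n)) (hw : w ∈ inexProj C y x θ)
    (wtil : EuclideanSpace ℝ (Fin n)) (hwtilC : wtil ∈ C)
    (hwtil : ∀ z ∈ C, ⟪ytil - wtil, z - wtil⟫ ≤ 0) :
    ‖w - wtil‖ ^ 2 ≤ ‖y - ytil‖ ^ 2 + 2 * θ * ‖y - x‖ ^ 2 :=
  inexProj_sq_dist_exactProj_general C x y ytil θ w hw wtil hwtilC hwtil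
end

section
/- Let Ω ⊆ ℝⁿ be open, C ⊆ Ω a nonempty closed convex set, f : Ω → ℝⁿ continuously differentiable, x̄ ∈ C with f(x̄) = 0 and f'(x̄) invertible. Suppose there are constants Γ > 0, L > 0, 0 < μ ≤ 1, and δ̂ > 0 with B_δ̂(x̄) ⊆ Ω such that for all x ∈ B_δ̂(x̄): (i) ‖f(x)‖ ≤ Γ‖x − x̄‖; (ii) f'(x) is invertible with ‖f'(x)⁻¹‖ ≤ ‖f'(x̄)⁻¹‖/(1 − L‖f'(x̄)⁻¹‖‖x − x̄‖^μ); (iii) ‖f(x̄) − f(x) − f'(x)(x̄ − x)‖ ≤ (μL/(1+μ))‖x − x̄‖^{1+μ}. Let 0 ≤ θ₀ and 0 ≤ η₀, let x₀ ∈ C ∩ B_δ̂(x̄), let y₀ ∈ ℝⁿ satisfy ‖f(x₀) + f'(x₀)(y₀ − x₀)‖ ≤ η₀‖f(x₀)‖, and let x₁ ∈ P_C(y₀, x₀, θ₀). Then ‖x₁ − x̄‖ ≤ [ (‖f'(x̄)⁻¹‖(η₀Γ(1+μ) + μL‖x₀ − x̄‖^μ)) / ((1+μ)(1 − L‖f'(x̄)⁻¹‖‖x₀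 − x̄‖^μ)) · (1 + √(2θ₀)) + √(2θ₀) ] · ‖x₀ − x̄‖. -/
/-!
The Newton step `y₀` solves the linearised equation up to the residual `η₀‖f x₀‖`, so
`f'(x₀)(y₀ - x̄)` is that residual plus the linearisation error of `f` at `x₀`; inverting `f'(x₀)`
bounds `‖y₀ - x̄‖` by `K ‖x₀ - x̄‖`, where `K` is the first fraction of the estimate. The inexact
projection then moves `y₀` by at most `√θ₀ ‖y₀ - x₀‖ ≤ √θ₀ (‖y₀ - x̄‖ + ‖x₀ - x̄‖)` further from
the feasible point `x̄`.
-/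

open Metric RealInnerProductSpace

lemma le_add_of_sq_le_mul_add_sq {a b e : ℝ} (hb : 0 ≤ b) (he : 0 ≤ e)
    (h : a ^ 2 ≤ b * a + e ^ 2) : a ≤ b + e := by
  nlinarith

lemma norm_sub_le_of_inner_le {E : Type*} [NormedAddCommGroup E] [InnerProductSpace ℝ E]
    {w y z : E} {ε : ℝ} (hε : 0 ≤ ε) (h : ⟪y - w, z - w⟫ ≤ ε ^ 2) :
    ‖w - z‖ ≤ ‖y - z‖ + ε := by
  have hsplit : ‖w - z‖ ^ 2 = ⟪y - w, z - w⟫ + ⟪y - z, w - z⟫ := by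
    rw [← real_inner_self_eq_norm_sq]
    simp only [inner_sub_left, inner_sub_right]
    ring
  refine le_add_of_sq_le_mul_add_sq (norm_nonneg _) hε ?_
  linarith [real_inner_le_norm (y - z) (w - z)]

lemma norm_sub_le_of_mem_inexProj {n : ℕ} {C : Set (EuclideanSpace ℝ (Fin n))}
    {y x w z : EuclideanSpace ℝ (Fin n)} {θ : ℝ} (hθ : 0 ≤ θ) (hw : w ∈ inexProj C y x θ)
    (hz : z ∈ C) : ‖w - z‖ ≤ ‖y - z‖ + √θ * ‖y - x‖ := by
  refine norm_sub_le_of_inner_le (by positivity) ?_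
  rw [mul_pow, Real.sq_sqrt hθ]
  exact hw.2 z hz

lemma newton_step_error_le {𝕜 E F : Type*} [NontriviallyNormedField 𝕜]
    [NormedAddCommGroup E] [NormedSpace 𝕜 E] [NormedAddCommGroup F] [NormedSpace 𝕜 F]
    (f : E → F) (A : E →L[𝕜] F) (B : F →L[𝕜] E) (hBA : B.comp A = .id 𝕜 E) {xbar : E}
    (hf : f xbar = 0) (x y : E) :
    ‖y - xbar‖ ≤ ‖B‖ * (‖f x + A (y - x)‖ + ‖f xbar - f x - A (xbar - x)‖) := by
  have hsplit : A (y - xbar) = (f x + A (y - x)) + (f xbar - f x - A (xbar - x)) := by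
    rw [hf, show y - xbar = (y - x) - (xbar - x) by abel, map_sub]
    abel
  calc ‖y - xbar‖ = ‖B (A (y - xbar))‖ := by
        rw [← ContinuousLinearMap.comp_apply, hBA, ContinuousLinearMap.id_apply]
    _ ≤ ‖B‖ * ‖A (y - xbar)‖ := B.le_opNorm _
    _ ≤ ‖B‖ * (‖f x + A (y - x)‖ + ‖f xbar - f x - A (xbar - x)‖) := by
        rw [hsplit]
        gcongr
        exact norm_add_le _ _

theorem inexact_newton_inexP_step_general {n : ℕ}
    (C : Set (EuclideanSpace ℝ (Fin n)))
    (f : EuclideanSpace ℝ (Fin n) → EuclideanSpace ℝ (Fin n))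
    (f' : EuclideanSpace ℝ (Fin n) → EuclideanSpace ℝ (Fin n) →L[ℝ] EuclideanSpace ℝ (Fin n))
    (xbar : EuclideanSpace ℝ (Fin n)) (hxbarC : xbar ∈ C) (hfxbar : f xbar = 0)
    (A' : EuclideanSpace ℝ (Fin n) →L[ℝ] EuclideanSpace ℝ (Fin n))
    (Γ L μ δhat : ℝ) (hμ0 : 0 < μ)
    (hgrow : ∀ x ∈ ball xbar δhat, ‖f x‖ ≤ Γ * ‖x - xbar‖)
    (hinv : ∀ x ∈ ball xbar δhat,
      ∃ B : EuclideanSpace ℝ (Fin n) →L[ℝ] EuclideanSpace ℝ (Fin n),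
        B.comp (f' x) = ContinuousLinearMap.id ℝ _ ∧
        (f' x).comp B = ContinuousLinearMap.id ℝ _ ∧
        ‖B‖ ≤ ‖A'‖ / (1 - L * ‖A'‖ * ‖x - xbar‖ ^ μ))
    (htaylor : ∀ x ∈ ball xbar δhat,
      ‖f xbar - f x - f' x (xbar - x)‖ ≤ μ * L / (1 + μ) * ‖x - xbar‖ ^ (1 + μ))
    (θ₀ η₀ : ℝ) (hθ₀ : 0 ≤ θ₀) (hη₀ : 0 ≤ η₀)
    (x₀ : EuclideanSpace ℝ (Fin n)) (hx₀B : x₀ ∈ ball xbar δhat)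
    (y₀ : EuclideanSpace ℝ (Fin n))
    (hy₀ : ‖f x₀ + f' x₀ (y₀ - x₀)‖ ≤ η₀ * ‖f x₀‖)
    (x₁ : EuclideanSpace ℝ (Fin n)) (hx₁ : x₁ ∈ inexProj C y₀ x₀ θ₀) :
    ‖x₁ - xbar‖ ≤
      (‖A'‖ * (η₀ * Γ * (1 + μ) + μ * L * ‖x₀ - xbar‖ ^ μ) /
          ((1 + μ) * (1 - L * ‖A'‖ * ‖x₀ - xbar‖ ^ μ)) * (1 + Real.sqrt (2 * θ₀))
        + Real.sqrt (2 * θ₀)) * ‖x₀ - xbar‖ := by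
  obtain ⟨B, hBA, -, hB⟩ := hinv x₀ hx₀B
  set r := ‖x₀ - xbar‖
  set d := 1 - L * ‖A'‖ * r ^ μ
  set K := ‖A'‖ * (η₀ * Γ * (1 + μ) + μ * L * r ^ μ) / ((1 + μ) * d)
  have hpow : r ^ (1 + μ) = r ^ μ * r := by
    rw [add_comm, Real.rpow_add_one' (norm_nonneg _) (by linarith)]
  have hy₀K : ‖y₀ - xbar‖ ≤ K * r :=
    calc ‖y₀ - xbar‖
        ≤ ‖B‖ * (‖f x₀ + f' x₀ (y₀ - x₀)‖ + ‖f xbar - f x₀ - f' x₀ (xbar - x₀)‖) :=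
          newton_step_error_le f (f' x₀) B hBA hfxbar x₀ y₀
      _ ≤ ‖A'‖ / d * (η₀ * (Γ * r) + μ * L / (1 + μ) * r ^ (1 + μ)) := by
          refine mul_le_mul hB (add_le_add ?_ (htaylor x₀ hx₀B)) (by positivity)
            ((norm_nonneg B).trans hB)
          exact hy₀.trans (mul_le_mul_of_nonneg_left (hgrow x₀ hx₀B) hη₀)
      _ = K * r := by
          -- for `d = 0` both sides are `0`, since `x / 0 = 0`
          rcases eq_or_ne d 0 with hd | hd
          · simp [K, hd]
          · simp only [K, hpow]
            field_simp
  have hθ : √θ₀ ≤ √(2 * θ₀) := Real.sqrt_le_sqrt (by linarith)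
  have hy₀x₀ : ‖y₀ - x₀‖ ≤ ‖y₀ - xbar‖ + r := by
    simpa only [norm_sub_rev xbar x₀] using norm_sub_le_norm_sub_add_norm_sub y₀ xbar x₀
  calc ‖x₁ - xbar‖ ≤ ‖y₀ - xbar‖ + √θ₀ * ‖y₀ - x₀‖ :=
        norm_sub_le_of_mem_inexProj hθ₀ hx₁ hxbarC
    _ ≤ K * r + √(2 * θ₀) * (K * r + r) := by gcongr; exact hy₀x₀.trans (by gcongr)
    _ = (K * (1 + √(2 * θ₀)) + √(2 * θ₀)) * r := by ring

/-- Single-step error estimate for the inexact Newton method with feasible inexact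
projections for smooth equations. -/
theorem inexact_newton_inexP_step {n : ℕ}
    (Ω : Set (EuclideanSpace ℝ (Fin n))) (hΩ : IsOpen Ω)
    (C : Set (EuclideanSpace ℝ (Fin n))) (hCsub : C ⊆ Ω)
    (hCne : C.Nonempty) (hCc : IsClosed C) (hCcv : Convex ℝ C)
    (f : EuclideanSpace ℝ (Fin n) → EuclideanSpace ℝ (Fin n))
    (f' : EuclideanSpace ℝ (Fin n) → EuclideanSpace ℝ (Fin n) →L[ℝ] EuclideanSpace ℝ (Fin n))
    (hf : ∀ x ∈ Ω, HasFDerivAt f (f' x) x)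
    (xbar : EuclideanSpace ℝ (Fin n)) (hxbarC : xbar ∈ C) (hfxbar : f xbar = 0)
    (A' : EuclideanSpace ℝ (Fin n) →L[ℝ] EuclideanSpace ℝ (Fin n))
    (hA'l : A'.comp (f' xbar) = ContinuousLinearMap.id ℝ _)
    (hA'r : (f' xbar).comp A' = ContinuousLinearMap.id ℝ _)
    (Γ L μ δhat : ℝ) (hΓ : 0 < Γ) (hL : 0 < L) (hμ0 : 0 < μ) (hμ1 : μ ≤ 1)
    (hδhat : 0 < δhat) (hδΩ : ball xbar δhat ⊆ Ω)
    (hgrow : ∀ x ∈ ball xbar δhat, ‖f x‖ ≤ Γ * ‖x - xbar‖)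
    (hinv : ∀ x ∈ ball xbar δhat,
      ∃ B : EuclideanSpace ℝ (Fin n) →L[ℝ] EuclideanSpace ℝ (Fin n),
        B.comp (f' x) = ContinuousLinearMap.id ℝ _ ∧
        (f' x).comp B = ContinuousLinearMap.id ℝ _ ∧
        ‖B‖ ≤ ‖A'‖ / (1 - L * ‖A'‖ * ‖x - xbar‖ ^ μ))
    (htaylor : ∀ x ∈ ball xbar δhat,
      ‖f xbar - f x - f' x (xbar - x)‖ ≤ μ * L / (1 + μ) * ‖x - xbar‖ ^ (1 + μ))
    (θ₀ η₀ : ℝ) (hθ₀ : 0 ≤ θ₀) (hη₀ : 0 ≤ η₀)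
    (x₀ : EuclideanSpace ℝ (Fin n)) (hx₀C : x₀ ∈ C) (hx₀B : x₀ ∈ ball xbar δhat)
    (hdenom : L * ‖A'‖ * ‖x₀ - xbar‖ ^ μ < 1)
    (y₀ : EuclideanSpace ℝ (Fin n))
    (hy₀ : ‖f x₀ + f' x₀ (y₀ - x₀)‖ ≤ η₀ * ‖f x₀‖)
    (x₁ : EuclideanSpace ℝ (Fin n)) (hx₁ : x₁ ∈ inexProj C y₀ x₀ θ₀) :
    ‖x₁ - xbar‖ ≤
      (‖A'‖ * (η₀ * Γ * (1 + μ) + μ * L * ‖x₀ - xbar‖ ^ μ) /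
          ((1 + μ) * (1 - L * ‖A'‖ * ‖x₀ - xbar‖ ^ μ)) * (1 + Real.sqrt (2 * θ₀))
        + Real.sqrt (2 * θ₀)) * ‖x₀ - xbar‖ :=
  inexact_newton_inexP_step_general C f f' xbar hxbarC hfxbar A' Γ L μ δhat hμ0 hgrow hinv htaylor
    θ₀ η₀ hθ₀ hη₀ x₀ hx₀B y₀ hy₀ x₁ hx₁
end
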